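/- Let U ⊆ ℝ⁴ be open and let u : U → ℝ be a smooth solution of the second heavenly equation u₁₃ + u₂₄ + u₁₁u₂₂ − u₁₂² = 0 on U. Then for every λ ∈ ℝ, the vector fields X = ∂₄ + u₁₁∂₂ − u₁₂∂₁ + λ∂₁ and Y = ∂₃ + u₂₂∂₁ − u₁₂∂₂ − λ∂₂ satisfy [X,Y] = 0 identically on U. -/

import Mathlib

open scoped ContDiff

noncomputable section

/-- `pd i u x` is the partial derivative `∂u/∂xᵢ` at `x`. -/
def pd {n : ℕ} (i : Fin n) (u : (Fin n → ℝ) → ℝ) (x : Fin n → ℝ) : ℝ :=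
  fderiv ℝ u x (Pi.single i 1)

/-- `pd2 i j u x` is the second partial derivative `∂²u/∂xᵢ∂xⱼ` at `x`. -/
def pd2 {n : ℕ} (i j : Fin n) (u : (Fin n → ℝ) → ℝ) (x : Fin n → ℝ) : ℝ :=
  pd i (pd j u) x

/-- Lie bracket of vector fields : `[X,Y](x) = DY(x)(X(x)) − DX(x)(Y(x))`. -/
def lieBr {n : ℕ} (X Y : (Fin n → ℝ) → (Fin n → ℝ)) (x : Fin n → ℝ) : Fin n → ℝ :=
  fderiv ℝ Y x (X x) - fderiv ℝ X x (Y x)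

/-!
Write `H` for the left-hand side of the second heavenly equation. For every `C³` function `u`,
expanding `[X, Y]` in coordinates and using only the symmetry of third partial derivatives gives
`[X, Y] = (∂₂H) ∂₁ - (∂₁H) ∂₂`; the parameter `λ` drops out because `u₁₂₂ = u₂₂₁` and
`u₁₁₂ = u₁₂₁`. On a solution `H` vanishes on the open set `U`, hence so do its partial derivatives.
-/

open Filter Topology

section PartialDerivatives

variable {n : ℕ} {f g : (Fin n → ℝ) → ℝ} {x : Fin n → ℝ}

theorem fderiv_apply_eq_sum_pd (f : (Fin n → ℝ) → ℝ) (x v : Fin n → ℝ) :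
    fderiv ℝ f x v = ∑ i, v i * pd i f x := by
  conv_lhs => rw [pi_eq_sum_univ' v]
  simp [pd]

theorem Filter.EventuallyEq.pd_eq (h : f =ᶠ[𝓝 x] g) (i : Fin n) : pd i f x = pd i g x := by
  rw [pd, pd, h.fderiv_eq]

@[simp] theorem pd_zero (i : Fin n) : pd i 0 x = 0 := by
  simp [pd]

@[simp] theorem pd_const (c : ℝ) (i : Fin n) : pd i (fun _ => c) x = 0 := by
  simp [pd]

@[simp] theorem pd_const_sub (c : ℝ) (i : Fin n) : pd i (fun y => c - f y) x = -pd i f x := by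
  rw [pd, fderiv_const_sub, pd]
  rfl

@[simp] theorem pd_sub_const (c : ℝ) (i : Fin n) : pd i (fun y => f y - c) x = pd i f x := by
  rw [pd, fderiv_sub_const, pd]

@[simp] theorem pd_neg (i : Fin n) : pd i (fun y => -f y) x = -pd i f x := by
  simp [pd]

theorem pd_add (hf : DifferentiableAt ℝ f x) (hg : DifferentiableAt ℝ g x) (i : Fin n) :
    pd i (f + g) x = pd i f x + pd i g x := by
  simp [pd, fderiv_add hf hg]

theorem pd_sub (hf : DifferentiableAt ℝ f x) (hg : DifferentiableAt ℝ g x) (i : Fin n) :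
    pd i (f - g) x = pd i f x - pd i g x := by
  simp [pd, fderiv_sub hf hg]

theorem pd_mul (hf : DifferentiableAt ℝ f x) (hg : DifferentiableAt ℝ g x) (i : Fin n) :
    pd i (f * g) x = pd i f x * g x + f x * pd i g x := by
  rw [pd, pd, pd, fderiv_mul hf hg]
  simp only [add_apply, smul_apply, smul_eq_mul]
  ring

theorem pd_sq (hf : DifferentiableAt ℝ f x) (i : Fin n) :
    pd i (f ^ 2) x = 2 * f x * pd i f x := by
  simp [pd, fderiv_pow 2 hf]

theorem ContDiffAt.pd {m k : WithTop ℕ∞} (hf : ContDiffAt ℝ k f x) (hmk : m + 1 ≤ k)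
    (i : Fin n) : ContDiffAt ℝ m (pd i f) x :=
  (hf.fderiv_right hmk).clm_apply contDiffAt_const

theorem ContDiffAt.differentiableAt_pd2 (hf : ContDiffAt ℝ 3 f x) (i j : Fin n) :
    DifferentiableAt ℝ (pd2 i j f) x :=
  ((hf.pd (m := 2) (by norm_num) j).pd (m := 1) (by norm_num) i).differentiableAt one_ne_zero

theorem pd_pd_eq_fderiv_fderiv (hf : DifferentiableAt ℝ (fderiv ℝ f) x) (i j : Fin n) :
    pd i (pd j f) x = fderiv ℝ (fderiv ℝ f) x (Pi.single i 1) (Pi.single j 1) := by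
  change fderiv ℝ (fun y => fderiv ℝ f y (Pi.single j 1)) x (Pi.single i 1) = _
  simp [fderiv_clm_apply hf (differentiableAt_const _)]

theorem pd_pd_comm (hf : ContDiffAt ℝ 2 f x) (i j : Fin n) :
    pd i (pd j f) x = pd j (pd i f) x := by
  have hf' : DifferentiableAt ℝ (fderiv ℝ f) x :=
    (hf.fderiv_right (m := 1) (by norm_num)).differentiableAt one_ne_zero
  rw [pd_pd_eq_fderiv_fderiv hf', pd_pd_eq_fderiv_fderiv hf']
  exact hf.isSymmSndFDerivAt (by simp [minSmoothness_of_isRCLikeNormedField]) _ _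

theorem pd_pd2_comm_left (hf : ContDiffAt ℝ 3 f x) (i j k : Fin n) :
    pd i (pd2 j k f) x = pd j (pd2 i k f) x :=
  pd_pd_comm (hf.pd (by norm_num) k) i j

theorem pd_pd2_comm_right (hf : ContDiffAt ℝ 3 f x) (i j k : Fin n) :
    pd i (pd2 j k f) x = pd i (pd2 k j f) x := by
  refine Filter.EventuallyEq.pd_eq ?_ i
  filter_upwards [hf.eventually (by simp)] with y hy
  exact pd_pd_comm (hy.of_le (by norm_num)) j k

end PartialDerivatives

theorem lieBr_apply {n : ℕ} {X Y : (Fin n → ℝ) → (Fin n → ℝ)} {x : Fin n → ℝ}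
    (hX : DifferentiableAt ℝ X x) (hY : DifferentiableAt ℝ Y x) (i : Fin n) :
    lieBr X Y x i = ∑ j, (X x j * pd j (fun y => Y y i) x - Y x j * pd j (fun y => X y i) x) := by
  have hcomp : ∀ Z : (Fin n → ℝ) → (Fin n → ℝ), DifferentiableAt ℝ Z x → ∀ v,
      fderiv ℝ Z x v i = ∑ j, v j * pd j (fun y => Z y i) x := fun Z hZ v => by
    rw [← fderiv_apply_eq_sum_pd, fderiv_apply hZ]
    rfl
  rw [lieBr, Pi.sub_apply, hcomp Y hY, hcomp X hX, Finset.sum_sub_distrib]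

-- Coordinates are indexed from `0`: `pd2 0 2 u` is `u₁₃`.
def secondHeavenly (u : (Fin 4 → ℝ) → ℝ) : (Fin 4 → ℝ) → ℝ :=
  pd2 0 2 u + pd2 1 3 u + pd2 0 0 u * pd2 1 1 u - pd2 0 1 u ^ 2

def heavenlyLaxX (u : (Fin 4 → ℝ) → ℝ) (lam : ℝ) (x : Fin 4 → ℝ) : Fin 4 → ℝ :=
  ![lam - pd2 0 1 u x, pd2 0 0 u x, 0, 1]

def heavenlyLaxY (u : (Fin 4 → ℝ) → ℝ) (lam : ℝ) (x : Fin 4 → ℝ) : Fin 4 → ℝ :=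
  ![pd2 1 1 u x, -pd2 0 1 u x - lam, 1, 0]

section Heavenly

variable {u : (Fin 4 → ℝ) → ℝ} {x : Fin 4 → ℝ}

theorem pd_secondHeavenly (hu : ContDiffAt ℝ 3 u x) (k : Fin 4) :
    pd k (secondHeavenly u) x = pd k (pd2 0 2 u) x + pd k (pd2 1 3 u) x
      + pd k (pd2 0 0 u) x * pd2 1 1 u x + pd2 0 0 u x * pd k (pd2 1 1 u) x
      - 2 * pd2 0 1 u x * pd k (pd2 0 1 u) x := by
  have hd := hu.differentiableAt_pd2
  rw [secondHeavenly, pd_sub (by fun_prop) (by fun_prop), pd_add (by fun_prop) (by fun_prop),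
    pd_add (hd 0 2) (hd 1 3), pd_mul (hd 0 0) (hd 1 1), pd_sq (hd 0 1)]
  ring

theorem lieBr_heavenlyLaxX_heavenlyLaxY (hu : ContDiffAt ℝ 3 u x) (lam : ℝ) :
    lieBr (heavenlyLaxX u lam) (heavenlyLaxY u lam) x =
      ![pd 1 (secondHeavenly u) x, -pd 0 (secondHeavenly u) x, 0, 0] := by
  have hd := hu.differentiableAt_pd2
  have L := pd_pd2_comm_left hu
  have R := pd_pd2_comm_right hu
  have h₁ : pd 0 (pd2 1 1 u) x = pd 1 (pd2 0 1 u) x := L 0 1 1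
  have h₂ : pd 3 (pd2 1 1 u) x = pd 1 (pd2 1 3 u) x := (L 3 1 1).trans (R 1 3 1)
  have h₃ : pd 0 (pd2 0 1 u) x = pd 1 (pd2 0 0 u) x := (R 0 0 1).trans (L 0 1 0)
  have h₄ : pd 2 (pd2 0 1 u) x = pd 1 (pd2 0 2 u) x :=
    ((L 2 0 1).trans (R 0 2 1)).trans (L 0 1 2)
  have h₅ : pd 3 (pd2 0 1 u) x = pd 0 (pd2 1 3 u) x := (L 3 0 1).trans (R 0 3 1)
  have h₆ : pd 2 (pd2 0 0 u) x = pd 0 (pd2 0 2 u) x := (L 2 0 0).trans (R 0 2 0)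
  funext i
  rw [lieBr_apply (by unfold heavenlyLaxX Matrix.vecCons; fun_prop)
    (by unfold heavenlyLaxY Matrix.vecCons; fun_prop)]
  fin_cases i
  · simp only [heavenlyLaxX, heavenlyLaxY, Fin.sum_univ_four, Fin.zero_eta, Matrix.cons_val_zero,
      Matrix.cons_val_one, Matrix.cons_val, pd_const_sub, pd_secondHeavenly hu]
    linear_combination (lam - pd2 0 1 u x) * h₁ + h₂ + pd2 1 1 u x * h₃ + h₄
  · simp only [heavenlyLaxX, heavenlyLaxY, Fin.sum_univ_four, Fin.mk_one, Matrix.cons_val_zero,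
      Matrix.cons_val_one, Matrix.cons_val, pd_sub_const, pd_neg, pd_secondHeavenly hu]
    linear_combination pd2 0 0 u x * h₁ - (pd2 0 1 u x + lam) * h₃ - h₅ - h₆
  all_goals simp [heavenlyLaxX, heavenlyLaxY]

end Heavenly

/-- the Lax pair of the second heavenly equation
`u₁₃ + u₂₄ + u₁₁u₂₂ − u₁₂² = 0` commutes identically on solutions. -/
theorem statement8 (U : Set (Fin 4 → ℝ)) (hU : IsOpen U)
    (u : (Fin 4 → ℝ) → ℝ) (hu : ContDiffOn ℝ ∞ u U)
    (hsol : ∀ x ∈ U,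
      pd2 0 2 u x + pd2 1 3 u x + pd2 0 0 u x * pd2 1 1 u x - (pd2 0 1 u x) ^ 2 = 0)
    (lam : ℝ)
    (X Y : (Fin 4 → ℝ) → (Fin 4 → ℝ))
    (hX : X = fun x => (Pi.single 3 1 : Fin 4 → ℝ)
        + pd2 0 0 u x • (Pi.single 1 1 : Fin 4 → ℝ)
        - pd2 0 1 u x • (Pi.single 0 1 : Fin 4 → ℝ)
        + lam • (Pi.single 0 1 : Fin 4 → ℝ))
    (hY : Y = fun x => (Pi.single 2 1 : Fin 4 → ℝ)
        + pd2 1 1 u x • (Pi.single 0 1 : Fin 4 → ℝ)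
        - pd2 0 1 u x • (Pi.single 1 1 : Fin 4 → ℝ)
        - lam • (Pi.single 1 1 : Fin 4 → ℝ)) :
    ∀ x ∈ U, lieBr X Y x = 0 := by
  intro x hx
  have hux : ContDiffAt ℝ 3 u x := (hu.contDiffAt (hU.mem_nhds hx)).of_le (by norm_cast)
  have hsol_near : secondHeavenly u =ᶠ[𝓝 x] 0 := eventually_of_mem (hU.mem_nhds hx) hsol
  have hX' : X = heavenlyLaxX u lam := by
    subst hX; funext y i; fin_cases i <;> simp [heavenlyLaxX, neg_add_eq_sub]
  have hY' : Y = heavenlyLaxY u lam := by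
    subst hY; funext y i; fin_cases i <;> simp [heavenlyLaxY]
  rw [hX', hY', lieBr_heavenlyLaxX_heavenlyLaxY hux lam]
  simp [hsol_near.pd_eq]
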